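/- For A > 0, C > 0, B real with AC - B² ≥ 0 and σ > 0, ∫_{-∞}^{∞} e^{-σ² A y²/2} [√(2πCσ²) - Σ_{m=1}^{∞} (√(2πCσ²)/(m!(2m-1))) (B²σ²y²/(2C))^m ] dy = 2π √(C/A) √(1 - B²/(AC)). -/

import Mathlib

/-!
With `a = σ²A/2` and `x = B²/(AC) ∈ [0, 1]` we have `B²σ²y²/(2C) = a x y²`, and if the constant
term is read as the `n = 0` term of the series (where `2n - 1 = -1`) the integrand is
`-√(2πCσ²) e^{-ay²} ∑ₙ (a x)ⁿ y²ⁿ / (n! (2n - 1))`. Integrating term by term with the Gaussian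
moments `∫ y²ⁿ e^{-ay²} = (2n)! / (n! (4a)ⁿ) √(π/a)` turns the `n`-th term into `2π √(C/A)` times
the `n`-th term of the binomial series of `√(1 - x)`.

The binomial series is needed on the closed interval, `x = 1` being the case `AC = B²`. It follows
from the Catalan generating function `C(t) = 1 + t C(t)²` via `√(1 - 4t) = 1 - 2t C(t)`; the
coefficients are summable at `t = 1/4` because the partial sums of `catalan k / 4ᵏ` telescope to
`2 - 2 centralBinom N / 4ᴺ`.
-/

open MeasureTheory Real Finset
open scoped Nat

theorem centralBinom_succ_eq_mul_catalan (k : ℕ) :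
    (k + 1).centralBinom = 2 * (2 * k + 1) * catalan k := by
  apply Nat.eq_of_mul_eq_mul_left k.succ_pos
  rw [Nat.succ_mul_centralBinom_succ, ← succ_mul_catalan_eq_centralBinom, Nat.succ_eq_add_one]
  ring

theorem sum_range_catalan_div_four_pow (N : ℕ) :
    ∑ k ∈ range N, (catalan k : ℝ) / 4 ^ k = 2 - 2 * N.centralBinom / 4 ^ N := by
  induction N with
  | zero => norm_num
  | succ N ih =>
    rw [sum_range_succ, ih, centralBinom_succ_eq_mul_catalan, ← succ_mul_catalan_eq_centralBinom]
    push_cast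
    field_simp
    ring

theorem summable_catalan_div_four_pow : Summable fun k ↦ (catalan k : ℝ) / 4 ^ k :=
  summable_of_sum_range_le (c := 2) (fun _ ↦ by positivity) fun N ↦ by
    rw [sum_range_catalan_div_four_pow]
    linarith [show (0 : ℝ) ≤ 2 * N.centralBinom / 4 ^ N by positivity]

theorem tsum_catalan_div_four_pow_le : ∑' k, (catalan k : ℝ) / 4 ^ k ≤ 2 :=
  tsum_le_of_sum_range_le (fun _ ↦ by positivity) fun N ↦ by
    rw [sum_range_catalan_div_four_pow]
    linarith [show (0 : ℝ) ≤ 2 * N.centralBinom / 4 ^ N by positivity]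

section CatalanSeries

variable {t : ℝ}

theorem catalan_mul_pow_le (ht₀ : 0 ≤ t) (ht : t ≤ 1 / 4) (k : ℕ) :
    (catalan k : ℝ) * t ^ k ≤ catalan k / 4 ^ k := by
  rw [div_eq_mul_one_div, ← one_div_pow]
  gcongr

theorem summable_catalan_mul_pow (ht₀ : 0 ≤ t) (ht : t ≤ 1 / 4) :
    Summable fun k ↦ (catalan k : ℝ) * t ^ k :=
  summable_catalan_div_four_pow.of_nonneg_of_le (fun _ ↦ by positivity) (catalan_mul_pow_le ht₀ ht)

theorem tsum_catalan_mul_pow_eq_one_add_mul_sq (ht₀ : 0 ≤ t) (ht : t ≤ 1 / 4) :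
    ∑' k, (catalan k : ℝ) * t ^ k = 1 + t * (∑' k, (catalan k : ℝ) * t ^ k) ^ 2 := by
  have hs := summable_catalan_mul_pow ht₀ ht
  have hnorm : Summable fun k ↦ ‖(catalan k : ℝ) * t ^ k‖ := hs.norm
  have hsq : (∑' k, (catalan k : ℝ) * t ^ k) ^ 2 = ∑' n, (catalan (n + 1) : ℝ) * t ^ n := by
    rw [sq, tsum_mul_tsum_eq_tsum_sum_antidiagonal_of_summable_norm hnorm hnorm]
    refine tsum_congr fun n ↦ ?_
    rw [catalan_succ', Nat.cast_sum, sum_mul]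
    refine sum_congr rfl fun ij hij ↦ ?_
    rw [← mem_antidiagonal.mp hij, pow_add]
    push_cast
    ring
  rw [hsq, ← tsum_mul_left, hs.tsum_eq_zero_add]
  simp [pow_succ, mul_comm t, mul_assoc]

theorem two_mul_mul_tsum_catalan_mul_pow_le_one (ht₀ : 0 ≤ t) (ht : t ≤ 1 / 4) :
    2 * t * ∑' k, (catalan k : ℝ) * t ^ k ≤ 1 := by
  have hC : ∑' k, (catalan k : ℝ) * t ^ k ≤ 2 :=
    (Summable.tsum_le_tsum (catalan_mul_pow_le ht₀ ht) (summable_catalan_mul_pow ht₀ ht)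
      summable_catalan_div_four_pow).trans tsum_catalan_div_four_pow_le
  have hC₀ : 0 ≤ ∑' k, (catalan k : ℝ) * t ^ k := tsum_nonneg fun _ ↦ by positivity
  nlinarith

theorem sqrt_one_sub_four_mul_eq (ht₀ : 0 ≤ t) (ht : t ≤ 1 / 4) :
    √(1 - 4 * t) = 1 - 2 * t * ∑' k, (catalan k : ℝ) * t ^ k := by
  rw [sqrt_eq_iff_mul_self_eq (by linarith)
    (by linarith [two_mul_mul_tsum_catalan_mul_pow_le_one ht₀ ht])]
  linear_combination (4 * t) * tsum_catalan_mul_pow_eq_one_add_mul_sq ht₀ ht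

end CatalanSeries

/-- `(1/2 choose n) (-1)ⁿ`, the coefficient of `xⁿ` in `√(1 - x)`; at `n = 0` the real factor
`2n - 1` is `-1`. -/
noncomputable def sqrtOneSubCoeff (n : ℕ) : ℝ := -(n.centralBinom / ((2 * n - 1) * 4 ^ n))

theorem sqrtOneSubCoeff_zero : sqrtOneSubCoeff 0 = 1 := by
  simp [sqrtOneSubCoeff]

theorem sqrtOneSubCoeff_succ (k : ℕ) :
    sqrtOneSubCoeff (k + 1) = -(2 * catalan k / 4 ^ (k + 1)) := by
  have h : 2 * ((k + 1 : ℕ) : ℝ) - 1 = 2 * k + 1 := by push_cast; ring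
  rw [sqrtOneSubCoeff, h, centralBinom_succ_eq_mul_catalan]
  push_cast
  field_simp

theorem hasSum_sqrtOneSubCoeff_mul_pow {x : ℝ} (hx₀ : 0 ≤ x) (hx : x ≤ 1) :
    HasSum (fun n ↦ sqrtOneSubCoeff n * x ^ n) √(1 - x) := by
  have ht₀ : 0 ≤ x / 4 := by positivity
  have ht : x / 4 ≤ 1 / 4 := by linarith
  rw [← hasSum_nat_add_iff' 1]
  have hterm (k : ℕ) :
      sqrtOneSubCoeff (k + 1) * x ^ (k + 1) = -(x / 2) * (catalan k * (x / 4) ^ k) := by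
    rw [sqrtOneSubCoeff_succ, div_pow]
    field_simp
    ring
  simp only [hterm, sum_range_one, pow_zero, mul_one, sqrtOneSubCoeff_zero]
  have hval : √(1 - x) - 1 = -(x / 2) * ∑' k, (catalan k : ℝ) * (x / 4) ^ k := by
    rw [show 1 - x = 1 - 4 * (x / 4) by ring, sqrt_one_sub_four_mul_eq ht₀ ht]
    ring
  rw [hval]
  exact (summable_catalan_mul_pow ht₀ ht).hasSum.mul_left _

theorem doubleFactorial_two_mul_sub_one_mul (n : ℕ) :
    (2 * n - 1)‼ * (2 ^ n * n !) = (2 * n)! := by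
  cases n with
  | zero => rfl
  | succ k =>
    rw [← Nat.doubleFactorial_two_mul, show 2 * (k + 1) = (2 * k + 1) + 1 by ring,
      Nat.factorial_eq_mul_doubleFactorial, Nat.add_sub_cancel, mul_comm]

theorem integrable_pow_mul_exp_neg_mul_sq {a : ℝ} (ha : 0 < a) (n : ℕ) :
    Integrable fun y : ℝ ↦ y ^ n * exp (-a * y ^ 2) := by
  simpa using integrable_rpow_mul_exp_neg_mul_sq ha (s := n)
    (by linarith [n.cast_nonneg (α := ℝ)])

theorem integral_pow_two_mul_mul_exp_neg_mul_sq {a : ℝ} (ha : 0 < a) (n : ℕ) :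
    ∫ y : ℝ, y ^ (2 * n) * exp (-a * y ^ 2) = (2 * n)! / (n ! * (4 * a) ^ n) * √(π / a) := by
  have heven : ∫ y : ℝ, y ^ (2 * n) * exp (-a * y ^ 2)
      = 2 * ∫ y in Set.Ioi 0, y ^ ((2 * n : ℕ) : ℝ) * exp (-a * y ^ (2 : ℝ)) := by
    rw [← integral_comp_abs (f := fun y ↦ y ^ ((2 * n : ℕ) : ℝ) * exp (-a * y ^ (2 : ℝ)))]
    refine integral_congr_ae (Filter.Eventually.of_forall fun y ↦ ?_)
    simp only [rpow_natCast, rpow_two, pow_mul, sq_abs]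
  rw [heven,
    integral_rpow_mul_exp_neg_mul_rpow two_pos (by linarith [(2 * n : ℕ).cast_nonneg (α := ℝ)]) ha,
    show (((2 * n : ℕ) : ℝ) + 1) / 2 = n + 1 / 2 by push_cast; ring, Gamma_nat_add_half,
    show -(((2 * n : ℕ) : ℝ) + 1) / 2 = -(n + 1 / 2 : ℝ) by push_cast; ring,
    rpow_neg ha.le, rpow_add ha, rpow_natCast, ← sqrt_eq_rpow, sqrt_div' _ ha.le,
    ← doubleFactorial_two_mul_sub_one_mul]
  have : 0 < √a := sqrt_pos.mpr ha
  have h4 : (4 : ℝ) ^ n = 2 ^ n * 2 ^ n := by rw [← mul_pow]; norm_num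
  push_cast
  rw [mul_pow, h4]
  field_simp

theorem centralBinom_mul_factorial_mul_factorial (n : ℕ) :
    n.centralBinom * n ! * n ! = (2 * n)! := by
  rw [Nat.centralBinom_eq_two_mul_choose,
    ← Nat.choose_mul_factorial_mul_factorial (by omega : n ≤ 2 * n), show 2 * n - n = n by omega]

theorem pow_div_mul_integral_pow_two_mul_mul_exp_neg_mul_sq {a : ℝ} (ha : 0 < a) (x : ℝ) (n : ℕ) :
    (a * x) ^ n / (n ! * (2 * n - 1)) * ∫ y : ℝ, y ^ (2 * n) * exp (-a * y ^ 2) =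
      -√(π / a) * (sqrtOneSubCoeff n * x ^ n) := by
  rw [integral_pow_two_mul_mul_exp_neg_mul_sq ha, sqrtOneSubCoeff,
    ← centralBinom_mul_factorial_mul_factorial]
  push_cast
  field_simp
  ring

theorem summable_pow_div_factorial_mul_two_mul_sub_one (z : ℝ) :
    Summable fun n : ℕ ↦ z ^ n / (n ! * (2 * n - 1)) := by
  refine Summable.of_norm_bounded (Real.summable_pow_div_factorial |z|) fun n ↦ ?_
  have h1 : 1 ≤ |2 * (n : ℝ) - 1| := by
    rcases Nat.eq_zero_or_pos n with rfl | hn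
    · norm_num
    · have : (1 : ℝ) ≤ n := by exact_mod_cast hn
      rw [abs_of_pos (by linarith)]
      linarith
  rw [norm_div, norm_mul, norm_pow, Real.norm_natCast, Real.norm_eq_abs, Real.norm_eq_abs]
  exact div_le_div_of_nonneg_left (by positivity) (by positivity)
    (le_mul_of_one_le_right (by positivity) h1)

theorem sub_tsum_succ_eq_neg_tsum (s z : ℝ) :
    s - ∑' m : ℕ, s / ((m + 1)! * (2 * (m + 1) - 1)) * z ^ (m + 1) =
      -∑' n : ℕ, s / (n ! * (2 * n - 1)) * z ^ n := by
  have hs : Summable fun n : ℕ ↦ s / (n ! * (2 * n - 1)) * z ^ n := by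
    simpa only [mul_div_assoc', div_mul_eq_mul_div, mul_comm s] using
      (summable_pow_div_factorial_mul_two_mul_sub_one z).mul_left s
  rw [hs.tsum_eq_zero_add]
  push_cast
  norm_num
  ring

theorem hasSum_integral_exp_neg_mul_sq_mul_tsum {a : ℝ} (ha : 0 < a) {c : ℕ → ℝ}
    (hc : Summable fun n ↦ c n * ∫ y : ℝ, y ^ (2 * n) * exp (-a * y ^ 2)) :
    HasSum (fun n ↦ c n * ∫ y : ℝ, y ^ (2 * n) * exp (-a * y ^ 2))
      (∫ y : ℝ, exp (-a * y ^ 2) * ∑' n, c n * y ^ (2 * n)) := by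
  have hnonneg (n : ℕ) (y : ℝ) : 0 ≤ y ^ (2 * n) * exp (-a * y ^ 2) :=
    mul_nonneg ((even_two_mul n).pow_nonneg y) (exp_pos _).le
  have hnorm (n : ℕ) : ∫ y : ℝ, ‖c n * (y ^ (2 * n) * exp (-a * y ^ 2))‖ =
      |c n * ∫ y : ℝ, y ^ (2 * n) * exp (-a * y ^ 2)| := by
    have h (y : ℝ) : ‖c n * (y ^ (2 * n) * exp (-a * y ^ 2))‖ =
        |c n| * (y ^ (2 * n) * exp (-a * y ^ 2)) := by
      rw [norm_mul, Real.norm_of_nonneg (hnonneg n y), Real.norm_eq_abs]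
    rw [integral_congr_ae (ae_of_all _ h), integral_const_mul, abs_mul,
      abs_of_nonneg (integral_nonneg (hnonneg n))]
  have h := hasSum_integral_of_summable_integral_norm
    (fun n ↦ (integrable_pow_mul_exp_neg_mul_sq ha (2 * n)).const_mul (c n))
    (by simpa only [hnorm] using hc.abs)
  have hpointwise (y : ℝ) : ∑' n, c n * (y ^ (2 * n) * exp (-a * y ^ 2)) =
      exp (-a * y ^ 2) * ∑' n, c n * y ^ (2 * n) := by
    rw [← tsum_mul_left]
    exact tsum_congr fun n ↦ by ring
  simpa only [integral_const_mul, hpointwise] using h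

theorem final_y_integration (A B C σ : ℝ) (hA : 0 < A) (hC : 0 < C)
    (hABC : 0 ≤ A * C - B ^ 2) (hσ : 0 < σ) :
    ∫ y : ℝ,
        Real.exp (-σ ^ 2 * A * y ^ 2 / 2) *
          (Real.sqrt (2 * π * C * σ ^ 2) -
            ∑' m : ℕ,
              Real.sqrt (2 * π * C * σ ^ 2) / (((m + 1).factorial : ℝ) * (2 * (m + 1) - 1)) *
                (B ^ 2 * σ ^ 2 * y ^ 2 / (2 * C)) ^ (m + 1)) =
      2 * π * Real.sqrt (C / A) * Real.sqrt (1 - B ^ 2 / (A * C)) := by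
  set a := σ ^ 2 * A / 2 with ha_def
  set x := B ^ 2 / (A * C) with hx_def
  set S := √(2 * π * C * σ ^ 2)
  have ha : 0 < a := by positivity
  have hx : x ≤ 1 := by rw [div_le_one (by positivity)]; linarith
  have hS : S * √(π / a) = 2 * π * √(C / A) := by
    rw [← sqrt_mul (by positivity), show 2 * π * C * σ ^ 2 * (π / a) = (2 * π) ^ 2 * (C / A) by
      field_simp; ring, sqrt_mul (by positivity), sqrt_sq (by positivity)]
  set c : ℕ → ℝ := fun n ↦ -S * ((a * x) ^ n / (n ! * (2 * n - 1)))
  have hintegrand (y : ℝ) : exp (-σ ^ 2 * A * y ^ 2 / 2) * (S - ∑' m : ℕ,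
      S / ((m + 1)! * (2 * (m + 1) - 1)) * (B ^ 2 * σ ^ 2 * y ^ 2 / (2 * C)) ^ (m + 1)) =
      exp (-a * y ^ 2) * ∑' n, c n * y ^ (2 * n) := by
    rw [sub_tsum_succ_eq_neg_tsum, ← tsum_neg]
    congr 1
    · rw [ha_def]; ring_nf
    · refine tsum_congr fun n ↦ ?_
      have : B ^ 2 * σ ^ 2 * y ^ 2 / (2 * C) = a * x * y ^ 2 := by
        rw [ha_def, hx_def]; field_simp
      rw [this]
      ring
  have hterm (n : ℕ) : c n * ∫ y : ℝ, y ^ (2 * n) * exp (-a * y ^ 2) =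
      2 * π * √(C / A) * (sqrtOneSubCoeff n * x ^ n) := by
    rw [mul_assoc, pow_div_mul_integral_pow_two_mul_mul_exp_neg_mul_sq ha, ← hS]
    ring
  have hsum := (hasSum_sqrtOneSubCoeff_mul_pow (by positivity) hx).mul_left (2 * π * √(C / A))
  simp only [← hterm] at hsum
  simp only [hintegrand]
  exact (hasSum_integral_exp_neg_mul_sq_mul_tsum ha hsum.summable).unique hsum
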